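/- arXiv:1708.09100 — 2 statements merged into one kernel-verified Lean document; each statement's English description precedes it below -/
import Mathlib

section
/- Let p ≥ 3 be a prime and n ≥ 1 an integer. Then 𝔰(F_p^{n}) ≤ 2p·r(F_p^{n}). -/
/-- A finite set in an abelian group is free of three-term arithmetic progressions:
it contains no three distinct elements x, y, z with x + z = 2y.
(Note that x ≠ z and x + z = y + y automatically force x, y, z to be pairwise distinct.) -/
def APFree {G : Type*} [AddCommGroup G] (A : Finset G) : Prop :=
  ∀ x ∈ A, ∀ y ∈ A, ∀ z ∈ A, x ≠ z → x + z ≠ y + y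

/-- r(G): the largest size of a subset of G without a three-term arithmetic progression. -/
noncomputable def rAP (G : Type*) [AddCommGroup G] : ℕ :=
  sSup {k | ∃ A : Finset G, APFree A ∧ A.card = k}

/-- The Erdős–Ginzburg–Ziv constant 𝔰(G): the smallest positive integer s such that every
sequence (multiset) of s elements of G has a subsequence of length exp(G) summing to zero. -/
noncomputable def EGZ (G : Type*) [AddCommGroup G] : ℕ :=
  sInf {s | 0 < s ∧ ∀ m : Multiset G, Multiset.card m = s →
    ∃ t ≤ m, Multiset.card t = AddMonoid.exponent G ∧ t.sum = 0}

/-- 𝔤(G): the smallest integer a such that every subset of G of size at least a contains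
exp(G) distinct elements summing to zero. -/
noncomputable def gEGZ (G : Type*) [AddCommGroup G] : ℕ :=
  sInf {a | ∀ A : Finset G, a ≤ A.card →
    ∃ B ⊆ A, B.card = AddMonoid.exponent G ∧ ∑ x ∈ B, x = 0}

/-!
Let `m • g = 0` on `G`, let every AP-free set have at most `r` elements, and let `S` have
`2 m r` elements. Call a sub-multiset `B` of `S` a block of level `N` with value `v` when
`RealizesMultiples B v N`, i.e. `B` contains, for every `s ≤ N`, some `s` elements summing to
`s • v`; every element `g` of `S` is a block of level `1` with value `g`. Three blocks of level `N`
whose values `x, y, z` satisfy `x + z = y + y` merge into a block of level `3 N` with value `y`,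
because `a • x + b • y + a • z = (2 a + b) • y`. Among more than `2 r` blocks three such values
always exist: either a value repeats three times or there are more than `r` distinct values, and
these contain a progression. After `⌊log₃ m⌋` rounds of merging the blocks have a level `Q` with
`Q ≤ m ≤ 3 Q`, and they still carry enough elements that, after gluing blocks of equal value,
either one value reaches level `m`, giving `m` elements with sum `m • v = 0`, or more than `r`
distinct values remain and a last progression `x, y, z` yields `2 a + b = m` elements with sum
`m • y = 0`.
-/

section

open Multiset

theorem Multiset.exists_le_card_eq {α : Type*} {s : Multiset α} {n : ℕ} (h : n ≤ card s) :
    ∃ t ≤ s, card t = n := by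
  obtain ⟨t, ht⟩ := card_pos_iff_exists_mem.1 <| by
    rw [card_powersetCard]
    exact Nat.choose_pos h
  exact ⟨t, (mem_powersetCard.1 ht).1, (mem_powersetCard.1 ht).2⟩

theorem Multiset.sum_le_sum_of_le {α : Type*} [AddCommMonoid α] [PartialOrder α]
    [CanonicallyOrderedAdd α] {s t : Multiset α} (h : s ≤ t) : s.sum ≤ t.sum := by
  obtain ⟨u, rfl⟩ := le_iff_exists_add.1 h
  simp

variable {G : Type*} [AddCommGroup G]

theorem exists_ap_of_lt_card {r : ℕ} (hA : ∀ A : Finset G, APFree A → A.card ≤ r)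
    {A : Finset G} (h : r < A.card) :
    ∃ x ∈ A, ∃ y ∈ A, ∃ z ∈ A, x ≠ y ∧ x ≠ z ∧ y ≠ z ∧ x + z = y + y := by
  have hA' : ¬ APFree A := fun hfree => (hA A hfree).not_gt h
  simp only [APFree, not_forall, not_not] at hA'
  obtain ⟨x, hx, y, hy, z, hz, hxz, hap⟩ := hA'
  refine ⟨x, hx, y, hy, z, hz, ?_, hxz, ?_, hap⟩
  · rintro rfl
    exact hxz (add_left_cancel hap).symm
  · rintro rfl
    exact hxz (add_right_cancel hap)

theorem one_le_of_forall_apFree_card_le {r : ℕ} (hA : ∀ A : Finset G, APFree A → A.card ≤ r) :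
    1 ≤ r :=
  hA {0} fun _ hx _ _ _ hz hxz =>
    (hxz ((Finset.mem_singleton.1 hx).trans (Finset.mem_singleton.1 hz).symm)).elim

theorem exists_ap_triple_le_of_two_mul_lt_card {α : Type*} {r : ℕ}
    (hA : ∀ A : Finset G, APFree A → A.card ≤ r) (f : α → G) {M : Multiset α}
    (hM : 2 * r < card M) :
    ∃ a b c, {a, b, c} ≤ M ∧ f a + f c = f b + f b := by
  classical
  by_cases hfiber : ∃ v, 3 ≤ card (M.filter fun a => v = f a)
  · obtain ⟨v, hv⟩ := hfiber
    obtain ⟨t, ht, htcard⟩ := exists_le_card_eq hv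
    obtain ⟨a, b, c, rfl⟩ := card_eq_three.1 htcard
    have hf : ∀ x ∈ ({a, b, c} : Multiset α), f x = v := fun x hx =>
      (of_mem_filter (mem_of_le ht hx)).symm
    refine ⟨a, b, c, ht.trans (filter_le _ _), ?_⟩
    rw [hf a (by simp), hf b (by simp), hf c (by simp)]
  push Not at hfiber
  have hV : r < (M.map f).toFinset.card := by
    have : card M ≤ 2 * (M.map f).toFinset.card := calc
      card M = ∑ v ∈ (M.map f).toFinset, (M.map f).count v := by
        rw [toFinset_sum_count_eq, card_map]
      _ ≤ ∑ _v ∈ (M.map f).toFinset, 2 :=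
        Finset.sum_le_sum fun v _ => by rw [count_map]; have := hfiber v; omega
      _ = 2 * (M.map f).toFinset.card := by rw [Finset.sum_const, smul_eq_mul, mul_comm]
    omega
  obtain ⟨x, hx, y, hy, z, hz, hxy, hxz, hyz, hap⟩ := exists_ap_of_lt_card hA hV
  simp only [mem_toFinset, mem_map] at hx hy hz
  obtain ⟨a, ha, rfl⟩ := hx
  obtain ⟨b, hb, rfl⟩ := hy
  obtain ⟨c, hc, rfl⟩ := hz
  have hnodup : ({a, b, c} : Multiset α).Nodup := by
    simp [ne_of_apply_ne f hxy, ne_of_apply_ne f hxz, ne_of_apply_ne f hyz]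
  refine ⟨a, b, c, (le_iff_subset hnodup).2 ?_, hap⟩
  simp [ha, hb, hc]

def RealizesMultiples (B : Multiset G) (v : G) (N : ℕ) : Prop :=
  ∀ s ≤ N, ∃ t ≤ B, card t = s ∧ t.sum = s • v

namespace RealizesMultiples

theorem zero (v : G) : RealizesMultiples 0 v 0 := fun s hs =>
  ⟨0, le_rfl, by simp [Nat.le_zero.1 hs], by simp [Nat.le_zero.1 hs]⟩

theorem singleton (g : G) : RealizesMultiples {g} g 1 := by
  intro s hs
  obtain rfl | rfl : s = 0 ∨ s = 1 := by omega
  · exact ⟨0, zero_le _, by simp, by simp⟩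
  · exact ⟨{g}, le_rfl, by simp, by simp⟩

theorem add {B₁ B₂ : Multiset G} {v : G} {N₁ N₂ : ℕ} (h₁ : RealizesMultiples B₁ v N₁)
    (h₂ : RealizesMultiples B₂ v N₂) : RealizesMultiples (B₁ + B₂) v (N₁ + N₂) := by
  intro s hs
  obtain ⟨t₁, ht₁, hcard₁, hsum₁⟩ := h₁ (min s N₁) (min_le_right _ _)
  obtain ⟨t₂, ht₂, hcard₂, hsum₂⟩ := h₂ (s - min s N₁) (by omega)
  refine ⟨t₁ + t₂, add_le_add ht₁ ht₂, by simp only [card_add]; omega, ?_⟩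
  rw [sum_add, hsum₁, hsum₂, ← add_nsmul, Nat.add_sub_cancel' (min_le_left _ _)]

theorem multiset_sum {P : Multiset (Multiset G)} {v : G} {N : ℕ}
    (h : ∀ B ∈ P, RealizesMultiples B v N) : RealizesMultiples P.sum v (card P * N) := by
  induction P using Multiset.induction_on with
  | empty => simpa using zero v
  | cons B P ih =>
    rw [sum_cons, card_cons, add_mul, one_mul, add_comm _ N]
    exact (h B (mem_cons_self B P)).add (ih fun B' hB' => h B' (mem_cons_of_mem hB'))

theorem exists_of_ap {B₁ B₂ B₃ : Multiset G} {x y z : G} {N₁ N₂ N₃ a b : ℕ}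
    (h₁ : RealizesMultiples B₁ x N₁) (h₂ : RealizesMultiples B₂ y N₂)
    (h₃ : RealizesMultiples B₃ z N₃) (hap : x + z = y + y)
    (ha₁ : a ≤ N₁) (hb : b ≤ N₂) (ha₃ : a ≤ N₃) :
    ∃ t ≤ B₁ + B₂ + B₃, card t = 2 * a + b ∧ t.sum = (2 * a + b) • y := by
  obtain ⟨t₁, ht₁, hcard₁, hsum₁⟩ := h₁ a ha₁
  obtain ⟨t₂, ht₂, hcard₂, hsum₂⟩ := h₂ b hb
  obtain ⟨t₃, ht₃, hcard₃, hsum₃⟩ := h₃ a ha₃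
  refine ⟨t₁ + t₂ + t₃, add_le_add (add_le_add ht₁ ht₂) ht₃, by simp only [card_add]; omega, ?_⟩
  calc (t₁ + t₂ + t₃).sum = a • (x + z) + b • y := by
        rw [sum_add, sum_add, hsum₁, hsum₂, hsum₃, nsmul_add]; abel
    _ = (2 * a + b) • y := by rw [hap, ← two_nsmul, ← mul_nsmul, add_nsmul]

theorem add_add_of_ap {B₁ B₂ B₃ : Multiset G} {x y z : G} {N : ℕ}
    (h₁ : RealizesMultiples B₁ x N) (h₂ : RealizesMultiples B₂ y N)
    (h₃ : RealizesMultiples B₃ z N) (hap : x + z = y + y) :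
    RealizesMultiples (B₁ + B₂ + B₃) y (3 * N) := by
  intro s hs
  have key := h₁.exists_of_ap h₂ h₃ hap (a := min N (s / 2)) (b := s - 2 * min N (s / 2))
    (min_le_left _ _) (by omega) (min_le_left _ _)
  rwa [Nat.add_sub_cancel' (by omega)] at key

end RealizesMultiples

/- A pool `P` lists blocks together with their values; the blocks of a pool are disjoint
sub-multisets of `S` exactly when `(P.map Prod.snd).sum ≤ S`. -/
theorem exists_pool_three_mul {r N : ℕ} (hA : ∀ A : Finset G, APFree A → A.card ≤ r)
    (P : Multiset (G × Multiset G)) (hP : ∀ e ∈ P, RealizesMultiples e.2 e.1 N) :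
    ∃ P' : Multiset (G × Multiset G), (∀ e ∈ P', RealizesMultiples e.2 e.1 (3 * N)) ∧
      (P'.map Prod.snd).sum ≤ (P.map Prod.snd).sum ∧ card P ≤ 3 * card P' + 2 * r := by
  induction P using Multiset.strongInductionOn with
  | ih P ih =>
  rcases le_or_gt (card P) (2 * r) with hsmall | hlarge
  · exact ⟨0, by simp, by simp, by simpa⟩
  obtain ⟨a, b, c, habc, hap⟩ := exists_ap_triple_le_of_two_mul_lt_card hA Prod.fst hlarge
  obtain ⟨R, rfl⟩ := Multiset.le_iff_exists_add.1 habc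
  obtain ⟨P', hP', hsum, hcard⟩ := ih R (lt_add_of_pos_left R (by simp [pos_iff_ne_zero]))
    fun e he => hP e (mem_add.2 (Or.inr he))
  refine ⟨(b.1, a.2 + b.2 + c.2) ::ₘ P', ?_, ?_, ?_⟩
  · simp only [mem_cons, forall_eq_or_imp]
    exact ⟨(hP a (by simp)).add_add_of_ap (hP b (by simp)) (hP c (by simp)) hap, hP'⟩
  · simpa [add_assoc] using hsum
  · simp only [card_add, card_cons, insert_eq_cons, card_singleton]
    omega

theorem exists_pool_pow_three {r : ℕ} (hA : ∀ A : Finset G, APFree A → A.card ≤ r)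
    (S : Multiset G) (j : ℕ) :
    ∃ P : Multiset (G × Multiset G), (∀ e ∈ P, RealizesMultiples e.2 e.1 (3 ^ j)) ∧
      (P.map Prod.snd).sum ≤ S ∧ card S + r ≤ 3 ^ j * (card P + r) := by
  induction j with
  | zero =>
    refine ⟨S.map fun g => (g, {g}), ?_, by simp, by simp⟩
    simpa using fun g _ => RealizesMultiples.singleton g
  | succ j ih =>
    obtain ⟨P, hP, hPS, hcard⟩ := ih
    obtain ⟨P', hP', hP'P, hcard'⟩ := exists_pool_three_mul hA P hP
    refine ⟨P', by rwa [pow_succ, mul_comm], hP'P.trans hPS, ?_⟩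
    calc card S + r ≤ 3 ^ j * (card P + r) := hcard
      _ ≤ 3 ^ j * (3 * (card P' + r)) := by gcongr; omega
      _ = 3 ^ (j + 1) * (card P' + r) := by ring

theorem exists_zero_sum_of_pool {m r Q : ℕ} (hm : ∀ g : G, m • g = 0)
    (hA : ∀ A : Finset G, APFree A → A.card ≤ r) (hQm : Q ≤ m) (hmQ : m ≤ 3 * Q)
    (P : Multiset (G × Multiset G)) (hP : ∀ e ∈ P, RealizesMultiples e.2 e.1 Q)
    (hcard : 2 * m * r + r ≤ Q * (card P + r)) :
    ∃ t ≤ (P.map Prod.snd).sum, card t = m ∧ t.sum = 0 := by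
  classical
  set fiber : G → Multiset (G × Multiset G) := fun v => P.filter fun e => v = e.1
  have hfiber (v : G) :
      RealizesMultiples ((fiber v).map Prod.snd).sum v (card (fiber v) * Q) := by
    rw [← card_map Prod.snd]
    refine RealizesMultiples.multiset_sum fun B hB => ?_
    obtain ⟨e, he, rfl⟩ := mem_map.1 hB
    obtain ⟨heP, rfl⟩ := mem_filter.1 he
    exact hP e heP
  have hsum_le {T : Multiset (G × Multiset G)} (hT : T ≤ P) :
      (T.map Prod.snd).sum ≤ (P.map Prod.snd).sum :=
    sum_le_sum_of_le (map_le_map hT)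
  by_cases hbig : ∃ v, m ≤ card (fiber v) * Q
  · obtain ⟨v, hv⟩ := hbig
    obtain ⟨t, ht, htcard, htsum⟩ := hfiber v m hv
    exact ⟨t, ht.trans (hsum_le (filter_le _ _)), htcard, htsum.trans (hm v)⟩
  push Not at hbig
  set V := (P.map Prod.fst).toFinset
  have hcount (v : G) : (P.map Prod.fst).count v = card (fiber v) := count_map _ _ _
  have hV : r < V.card := by
    have hr := one_le_of_forall_apFree_card_le hA
    have hmass : Q * card P + V.card ≤ V.card * m := calc
      Q * card P + V.card = ∑ v ∈ V, (card (fiber v) * Q + 1) := by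
          rw [Finset.sum_add_distrib, ← Finset.sum_mul, Finset.sum_const, smul_eq_mul, mul_one,
            mul_comm Q]
          simp only [← hcount]
          rw [toFinset_sum_count_eq, card_map]
      _ ≤ ∑ _v ∈ V, m := Finset.sum_le_sum fun v _ => hbig v
      _ = V.card * m := by rw [Finset.sum_const, smul_eq_mul]
    by_contra! hVr
    have := Nat.mul_le_mul_right m hVr
    nlinarith
  obtain ⟨x, hx, y, hy, z, hz, hxy, hxz, hyz, hap⟩ := exists_ap_of_lt_card hA hV
  have hQle {v : G} (hv : v ∈ V) : Q ≤ card (fiber v) * Q := by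
    rw [← hcount]
    exact Nat.le_mul_of_pos_left Q (count_pos.2 (mem_toFinset.1 hv))
  have hLx := hQle hx
  have hLy := hQle hy
  have hLz := hQle hz
  -- If `a` is a fibre level then `b ≤ m - 2 Q ≤ Q`, otherwise `b ≤ 1`: in both cases `b` fits
  -- into the level of `y`.
  set a := min (min (card (fiber x) * Q) (card (fiber z) * Q)) (m / 2)
  obtain ⟨t, ht, htcard, htsum⟩ := (hfiber x).exists_of_ap (hfiber y) (hfiber z) hap
    (a := a) (b := m - 2 * a) (by omega) (by omega) (by omega)
  have hdisjoint : fiber x + fiber y + fiber z ≤ P := by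
    refine Multiset.le_iff_count.2 fun e => ?_
    simp only [count_add, count_filter, fiber]
    split_ifs <;> grind
  refine ⟨t, ht.trans ?_, by omega, ?_⟩
  · simpa only [Multiset.map_add, sum_add] using hsum_le hdisjoint
  · rw [htsum, Nat.add_sub_cancel' (by omega), hm]

theorem exists_le_card_eq_sum_eq_zero {m r : ℕ} (hm : ∀ g : G, m • g = 0)
    (hA : ∀ A : Finset G, APFree A → A.card ≤ r) (S : Multiset G) (hS : 2 * m * r ≤ card S) :
    ∃ t ≤ S, card t = m ∧ t.sum = 0 := by
  obtain rfl | hm0 := m.eq_zero_or_pos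
  · exact ⟨0, zero_le S, rfl, sum_zero⟩
  obtain ⟨P, hP, hPS, hcard⟩ := exists_pool_pow_three hA S (Nat.log 3 m)
  have hlog : m < 3 * 3 ^ Nat.log 3 m := by
    rw [← pow_succ']
    exact Nat.lt_pow_succ_log_self (by norm_num) m
  obtain ⟨t, ht, htcard, htsum⟩ := exists_zero_sum_of_pool hm hA
    (Nat.pow_log_le_self 3 hm0.ne') hlog.le P hP (by linarith)
  exact ⟨t, ht.trans hPS, htcard, htsum⟩

theorem card_le_rAP [Finite G] {A : Finset G} (hA : APFree A) : A.card ≤ rAP G := by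
  have := Fintype.ofFinite G
  refine le_csSup ⟨Fintype.card G, ?_⟩ ⟨A, hA, rfl⟩
  rintro _ ⟨B, -, rfl⟩
  exact B.card_le_univ

theorem egz_le_two_mul_exponent_mul_rAP (G : Type*) [AddCommGroup G] [Finite G] :
    EGZ G ≤ 2 * AddMonoid.exponent G * rAP G := by
  have hA (A : Finset G) : APFree A → A.card ≤ rAP G := card_le_rAP
  have hexp : 0 < AddMonoid.exponent G := AddMonoid.ExponentExists.of_finite.exponent_pos
  have hr := one_le_of_forall_apFree_card_le hA
  exact Nat.sInf_le ⟨by positivity, fun S hS =>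
    exists_le_card_eq_sum_eq_zero AddMonoid.exponent_nsmul_eq_zero hA S hS.ge⟩

end

theorem stmt3_general (p n : ℕ) (hp : p.Prime) :
    EGZ (Fin n → ZMod p) ≤ 2 * p * rAP (Fin n → ZMod p) := by
  have : NeZero p := ⟨hp.ne_zero⟩
  have hexp : AddMonoid.exponent (Fin n → ZMod p) ≤ p :=
    Nat.le_of_dvd hp.pos (AddMonoid.exponent_dvd_of_forall_nsmul_eq_zero fun g => by ext; simp)
  calc EGZ (Fin n → ZMod p) ≤ 2 * AddMonoid.exponent (Fin n → ZMod p) * rAP (Fin n → ZMod p) :=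
        egz_le_two_mul_exponent_mul_rAP _
    _ ≤ 2 * p * rAP (Fin n → ZMod p) := by gcongr

/-- **Theorem 4.** Let p ≥ 3 be a prime and n ≥ 1 an integer. Then 𝔰(F_p^n) ≤ 2p·r(F_p^n). -/
theorem stmt3 (p n : ℕ) (hp : p.Prime) (hp3 : 3 ≤ p) (hn : 1 ≤ n) :
    EGZ (Fin n → ZMod p) ≤ 2 * p * rAP (Fin n → ZMod p) :=
  stmt3_general p n hp
end

section
/- Let p be a prime and let G = (Z/p^{a_1}Z) × ... × (Z/p^{a_n}Z), where a_1 ≥ a_2 ≥ ... ≥ a_n are positive integers. Then 𝔰(G) ≤ ((p^{a_1} - 1)/(p - 1))·𝔰(F_p^{n}), and consequently 𝔰(G) < (exp(G)/(p-1))·𝔰(F_p^{n}). -/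
/-! Reducing every coordinate mod p is a homomorphism G → F_p^n with kernel pG, so among any
𝔰(F_p^n) elements of G there are p whose sum lies in pG. Extracting many disjoint such p-blocks
and applying the same extraction to the block sums divided by p shows, by induction on e, that
among 𝔰(F_p^n)·(1 + p + ⋯ + p^(e-1)) elements there are p^e whose sum lies in p^e G. For
e = a_1 we have p^e = exp(G), so that sum is 0, and 1 + p + ⋯ + p^(a_1 - 1) = (p^a_1 - 1)/(p - 1). -/

namespace Multiset

variable {α β : Type*}

theorem exists_le_card_eq_s9 {m : Multiset α} {k : ℕ} (hk : k ≤ card m) :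
    ∃ t ≤ m, card t = k := by
  obtain ⟨t, ht⟩ := card_pos_iff_exists_mem.mp <| by
    rw [card_powersetCard]; exact Nat.choose_pos hk
  exact ⟨t, (mem_powersetCard.mp ht).1, (mem_powersetCard.mp ht).2⟩

theorem le_map_iff {f : α → β} {m : Multiset α} {t : Multiset β} :
    t ≤ m.map f ↔ ∃ u ≤ m, u.map f = t := by
  refine ⟨fun h => ?_, fun ⟨u, hu, hut⟩ => hut ▸ map_le_map hu⟩
  induction m using Quotient.inductionOn
  induction t using Quotient.inductionOn
  obtain ⟨l, hperm, hsub⟩ := h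
  obtain ⟨l', hl', rfl⟩ := List.sublist_map_iff.mp hsub
  exact ⟨l', hl'.subperm, Quotient.sound hperm⟩

end Multiset

open Multiset

def HasDivisibleSubsum (G : Type*) [AddCommMonoid G] (s q : ℕ) : Prop :=
  ∀ W : Multiset G, s ≤ card W → ∃ t ≤ W, card t = q ∧ ∃ g, t.sum = q • g

section DivisibleSubsum

variable {G : Type*} [AddCommMonoid G]

theorem card_and_sum_of_blocks {q : ℕ} {L : Multiset (G × Multiset G)}
    (hL : ∀ b ∈ L, card b.2 = q ∧ b.2.sum = q • b.1) :
    card (L.map Prod.snd).sum = q * card L ∧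
      (L.map Prod.snd).sum.sum = q • (L.map Prod.fst).sum := by
  induction L using Multiset.induction_on with
  | empty => simp
  | cons b L ih =>
    obtain ⟨ihc, ihs⟩ := ih fun b hb => hL b (mem_cons_of_mem hb)
    obtain ⟨hbc, hbs⟩ := hL b (mem_cons_self b L)
    simp [ihc, ihs, hbc, hbs, mul_add, smul_add, add_comm]

namespace HasDivisibleSubsum

variable {s q : ℕ}

theorem exists_blocks (h : HasDivisibleSubsum G s q) (c : ℕ) {W : Multiset G}
    (hW : s + q * c ≤ card W) :
    ∃ L : Multiset (G × Multiset G), card L = c ∧ (L.map Prod.snd).sum ≤ W ∧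
      ∀ b ∈ L, card b.2 = q ∧ b.2.sum = q • b.1 := by
  classical
  induction c generalizing W with
  | zero => exact ⟨0, rfl, by simp, by simp⟩
  | succ c ih =>
    obtain ⟨t, htW, htc, g, hg⟩ := h W (by omega)
    obtain ⟨L, hLc, hLW, hL⟩ := ih (W := W - t) <| by
      rw [card_sub htW, htc]; rw [mul_add_one] at hW; omega
    refine ⟨(g, t) ::ₘ L, by simp [hLc], ?_, ?_⟩
    · simpa [add_comm t] using (le_tsub_iff_right htW).mp hLW
    · intro b hb
      rcases mem_cons.mp hb with rfl | hb
      exacts [⟨htc, hg⟩, hL b hb]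

theorem mul {s' q' : ℕ} (h : HasDivisibleSubsum G s q) (h' : HasDivisibleSubsum G s' q') :
    HasDivisibleSubsum G (s + q * s') (q * q') := by
  intro W hW
  obtain ⟨L, hLc, hLW, hL⟩ := h.exists_blocks s' hW
  obtain ⟨u, huL, hu, g, hg⟩ := h' (L.map Prod.fst) (by simp [hLc])
  obtain ⟨M, hML, rfl⟩ := le_map_iff.mp huL
  obtain ⟨R, rfl⟩ := Multiset.le_iff_exists_add.mp hML
  have hM := card_and_sum_of_blocks fun b hb => hL b (mem_add.mpr (Or.inl hb))
  refine ⟨(M.map Prod.snd).sum, le_trans (by simp) hLW, ?_, g, ?_⟩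
  · rw [hM.1, ← hu, card_map]
  · rw [hM.2, hg, mul_smul]

theorem pow (h : HasDivisibleSubsum G s q) {e : ℕ} (he : 1 ≤ e) :
    HasDivisibleSubsum G (s * ∑ i ∈ Finset.range e, q ^ i) (q ^ e) := by
  induction e, he using Nat.le_induction with
  | base => simpa using h
  | succ e _ ih =>
    convert h.mul ih using 1
    · rw [geom_sum_succ]; ring
    · rw [pow_succ']

end HasDivisibleSubsum

end DivisibleSubsum

section EGZ

variable {G : Type*} [AddCommGroup G]

theorem exists_replicate_exponent_le [Finite G] (m : Multiset G)
    (hm : Nat.card G * AddMonoid.exponent G < card m) :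
    ∃ g, replicate (AddMonoid.exponent G) g ≤ m := by
  classical
  have := Fintype.ofFinite G
  by_contra! hlt
  simp only [← le_count_iff_replicate_le, not_le] at hlt
  have : card m ≤ Nat.card G * AddMonoid.exponent G := by
    calc card m = ∑ g, m.count g := by simp
      _ ≤ ∑ _g : G, AddMonoid.exponent G := Finset.sum_le_sum fun g _ => (hlt g).le
      _ = Nat.card G * AddMonoid.exponent G := by simp
  omega

theorem EGZ_spec [Finite G] :
    0 < EGZ G ∧ ∀ m : Multiset G, card m = EGZ G →
      ∃ t ≤ m, card t = AddMonoid.exponent G ∧ t.sum = 0 := by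
  refine Nat.sInf_mem (s := {s | 0 < s ∧ _})
    ⟨Nat.card G * AddMonoid.exponent G + 1, by omega, fun m hm => ?_⟩
  obtain ⟨g, hg⟩ := exists_replicate_exponent_le m (by omega)
  exact ⟨_, hg, card_replicate _ _,
    by rw [sum_replicate, AddMonoid.exponent_nsmul_eq_zero]⟩

theorem EGZ_le_of_hasDivisibleSubsum {s : ℕ} (hs : 0 < s)
    (h : HasDivisibleSubsum G s (AddMonoid.exponent G)) : EGZ G ≤ s := by
  refine Nat.sInf_le ⟨hs, fun m hm => ?_⟩
  obtain ⟨t, htm, htc, g, hg⟩ := h m hm.ge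
  exact ⟨t, htm, htc, by rw [hg, AddMonoid.exponent_nsmul_eq_zero]⟩

theorem hasDivisibleSubsum_EGZ_of_ker_le {K : Type*} [AddCommGroup K] [Finite K] (f : G →+ K)
    (hf : ∀ x, f x = 0 → ∃ y, x = AddMonoid.exponent K • y) :
    HasDivisibleSubsum G (EGZ K) (AddMonoid.exponent K) := by
  intro W hW
  obtain ⟨u, huW, huc⟩ := exists_le_card_eq_s9 hW
  obtain ⟨t', ht'u, ht'c, ht's⟩ := EGZ_spec.2 (u.map f) (by rw [card_map, huc])
  obtain ⟨t, htu, rfl⟩ := le_map_iff.mp ht'u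
  refine ⟨t, htu.trans huW, by rwa [card_map] at ht'c, hf _ ?_⟩
  rwa [map_multiset_sum]

end EGZ

theorem ZMod.exists_eq_nsmul_of_castHom_eq_zero {m N : ℕ} [NeZero N] (h : m ∣ N) {x : ZMod N}
    (hx : ZMod.castHom h (ZMod m) x = 0) : ∃ y, x = m • y := by
  obtain ⟨k, hk⟩ : m ∣ x.val := by
    rwa [ZMod.castHom_apply, ZMod.cast_eq_val, ZMod.natCast_eq_zero_iff] at hx
  exact ⟨k, by rw [nsmul_eq_mul, ← Nat.cast_mul, ← hk, ZMod.natCast_zmod_val]⟩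

theorem ZMod.exists_eq_nsmul_of_piMap_castHom_eq_zero {ι : Type*} {m : ℕ} {N : ι → ℕ}
    [∀ i, NeZero (N i)] (h : ∀ i, m ∣ N i) {x : ∀ i, ZMod (N i)}
    (hx : AddMonoidHom.piMap (fun i => (ZMod.castHom (h i) (ZMod m)).toAddMonoidHom) x = 0) :
    ∃ y, x = m • y := by
  choose y hy using fun i => ZMod.exists_eq_nsmul_of_castHom_eq_zero (h i) (congr_fun hx i)
  exact ⟨y, funext hy⟩

theorem AddMonoid.exponent_pi_zmod {ι : Type*} [Fintype ι] (N : ι → ℕ) (i₀ : ι)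
    (h : ∀ i, N i ∣ N i₀) : AddMonoid.exponent (∀ i, ZMod (N i)) = N i₀ := by
  rw [AddMonoid.exponent_pi]
  simp only [ZMod.exponent]
  exact dvd_antisymm (Finset.lcm_dvd fun i _ => h i) (Finset.dvd_lcm (Finset.mem_univ i₀))

theorem Nat.cast_geomSum_div_lt {p : ℕ} (hp : 2 ≤ p) (k : ℕ) :
    (((p ^ k - 1) / (p - 1) : ℕ) : ℝ) < (p : ℝ) ^ k / (p - 1) := by
  have hp1 : (1 : ℝ) < p := by exact_mod_cast hp
  rw [← Nat.geomSum_eq hp]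
  push_cast
  rw [geom_sum_eq hp1.ne']
  exact div_lt_div_of_pos_right (by linarith) (by linarith)

/-- **Lemma.** Let p be a prime and G = (ℤ/p^{a_1}ℤ) × ... × (ℤ/p^{a_n}ℤ) where
a_1 ≥ a_2 ≥ ... ≥ a_n are positive integers. Then
𝔰(G) ≤ ((p^{a_1} - 1)/(p - 1))·𝔰(F_p^n) (an exact natural-number quotient), and consequently
𝔰(G) < (exp(G)/(p-1))·𝔰(F_p^n). -/
theorem stmt9 (p : ℕ) (hp : p.Prime) (n : ℕ) (hn : 0 < n) (a : Fin n → ℕ)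
    (ha : ∀ i, 0 < a i) (hmono : Antitone a) :
    EGZ (∀ i, ZMod (p ^ a i)) ≤ (p ^ a ⟨0, hn⟩ - 1) / (p - 1) * EGZ (Fin n → ZMod p) ∧
    (EGZ (∀ i, ZMod (p ^ a i)) : ℝ) <
      (AddMonoid.exponent (∀ i, ZMod (p ^ a i)) : ℝ) / (p - 1) * EGZ (Fin n → ZMod p) := by
  have : NeZero p := ⟨hp.ne_zero⟩
  set a₀ := a ⟨0, hn⟩
  have hexpG : AddMonoid.exponent (∀ i, ZMod (p ^ a i)) = p ^ a₀ :=
    AddMonoid.exponent_pi_zmod _ _ fun i => pow_dvd_pow p (hmono (Nat.zero_le i))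
  have hexpK : AddMonoid.exponent (Fin n → ZMod p) = p :=
    AddMonoid.exponent_pi_zmod (fun _ => p) ⟨0, hn⟩ fun _ => dvd_rfl
  have hs : 0 < EGZ (Fin n → ZMod p) := EGZ_spec.1
  have hstep : HasDivisibleSubsum (∀ i, ZMod (p ^ a i)) (EGZ (Fin n → ZMod p)) p := by
    have hdvd i : p ∣ p ^ a i := dvd_pow_self p (ha i).ne'
    have := hasDivisibleSubsum_EGZ_of_ker_le
      (AddMonoidHom.piMap fun i => (ZMod.castHom (hdvd i) (ZMod p)).toAddMonoidHom)
      fun x hx => by rw [hexpK]; exact ZMod.exists_eq_nsmul_of_piMap_castHom_eq_zero hdvd hx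
    rwa [hexpK] at this
  have hbound : EGZ (∀ i, ZMod (p ^ a i)) ≤ (p ^ a₀ - 1) / (p - 1) * EGZ (Fin n → ZMod p) := by
    rw [← Nat.geomSum_eq hp.two_le, mul_comm]
    exact EGZ_le_of_hasDivisibleSubsum (Nat.mul_pos hs (geom_sum_pos p.zero_le (ha _).ne'))
      (hexpG ▸ hstep.pow (ha _))
  refine ⟨hbound, ?_⟩
  calc (EGZ (∀ i, ZMod (p ^ a i)) : ℝ)
      ≤ (((p ^ a₀ - 1) / (p - 1) : ℕ) : ℝ) * EGZ (Fin n → ZMod p) := by exact_mod_cast hbound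
    _ < (p : ℝ) ^ a₀ / (p - 1) * EGZ (Fin n → ZMod p) := by
      gcongr
      exact Nat.cast_geomSum_div_lt hp.two_le a₀
    _ = _ := by rw [hexpG]; push_cast; rfl
end
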